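/- In OP_{2i}(mi, m), the two cycles (1,m-1,1,m-1,...,1,m-1) and (m-1,1,m-1,1,...,m-1,1) (each with 2i entries) are homologous: their difference is the boundary of c = Σ_{j=1}^{i} (1,m-1,...,1,m-2,1,...,m-1,1) ∈ OP_{2i+1}(mi,m), where in the j-th summand the entry m-2 appears in position 2j. -/

import Mathlib

open scoped Classical

/-- Basis of `OP_k(ℓ,m)`: ordered partitions of `ℓ` into `k` parts, all in `{1,...,m-1}`. -/
def OPb (ℓ : ℤ) (m k : ℕ) : Type :=
  {l : List ℕ // l.length = k ∧ (l.sum : ℤ) = ℓ ∧ ∀ x ∈ l, 1 ≤ x ∧ x < m}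

/-- The degree-`k` chain module of the complex of ordered partitions with upper bound. -/
abbrev OPMod (R : Type) [CommRing R] (ℓ : ℤ) (m k : ℕ) := OPb ℓ m k →₀ R

/-- The alternating sum of adjacent merges of a list, dropping merged entries `≥ m`. -/
noncomputable def dList (R : Type) [CommRing R] (m : ℕ) : List ℕ → (List ℕ →₀ R)
  | [] => 0
  | [_] => 0
  | a :: b :: t =>
      (if a + b < m then -Finsupp.single ((a + b) :: t) (1 : R) else 0)
        - Finsupp.mapDomain (List.cons a) (dList R m (b :: t))

/-- Embedding of `OP_k(ℓ,m)` into the free module on all lists. -/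
noncomputable def eL (R : Type) [CommRing R] (ℓ : ℤ) (m k : ℕ) :
    OPMod R ℓ m k →ₗ[R] (List ℕ →₀ R) :=
  Finsupp.lmapDomain R R Subtype.val

noncomputable def DL (R : Type) [CommRing R] (m : ℕ) : (List ℕ →₀ R) →ₗ[R] (List ℕ →₀ R) :=
  Finsupp.lsum R fun l => LinearMap.toSpanSingleton R _ (dList R m l)

noncomputable def rL (R : Type) [CommRing R] (ℓ : ℤ) (m k : ℕ) :
    (List ℕ →₀ R) →ₗ[R] OPMod R ℓ m k :=
  Finsupp.lcomapDomain Subtype.val Subtype.val_injective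

/-- The differential of the complex `OP_*(ℓ,m)`: merge adjacent entries with alternating
signs `(-1)^i`, dropping any term in which the merged entry is `≥ m`. -/
noncomputable def dOP (R : Type) [CommRing R] (ℓ : ℤ) (m k : ℕ) :
    OPMod R ℓ m (k + 1) →ₗ[R] OPMod R ℓ m k :=
  (rL R ℓ m k) ∘ₗ (DL R m) ∘ₗ (eL R ℓ m (k + 1))

/-- The outgoing differential from degree `k` (zero in degree `0`). -/
noncomputable def dOPOut (R : Type) [CommRing R] (ℓ : ℤ) (m : ℕ) :
    (k : ℕ) → OPMod R ℓ m k →ₗ[R] OPMod R ℓ m (k - 1)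
  | 0 => 0
  | (k + 1) => dOP R ℓ m k

/-- Homology of the complex `OP_*(ℓ,m)` in degree `k`. -/
noncomputable abbrev OPH (R : Type) [CommRing R] (ℓ : ℤ) (m k : ℕ) :=
  letI : HasQuotient (LinearMap.ker (dOPOut R ℓ m k))
      (Submodule R (LinearMap.ker (dOPOut R ℓ m k))) :=
      Submodule.hasQuotient (R := R) (M := LinearMap.ker (dOPOut R ℓ m k))
  LinearMap.ker (dOPOut R ℓ m k) ⧸
    (LinearMap.range (dOPOut R ℓ m (k + 1))).comap (LinearMap.ker (dOPOut R ℓ m k)).subtype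

/-- The chain map `φ : OP_{*-2}(ℓ-m,m) → OP_*(ℓ,m)`, prepending `(1, m-1)`. -/
noncomputable def phiOP (R : Type) [CommRing R] (ℓ : ℤ) (m : ℕ) (hm : 2 ≤ m) (k : ℕ) :
    OPMod R (ℓ - m) m k →ₗ[R] OPMod R ℓ m (k + 2) :=
  Finsupp.lmapDomain R R fun b =>
    ⟨1 :: (m - 1) :: b.1, by
      obtain ⟨h1, h2, h3⟩ := b.2
      refine ⟨by simpa using h1, ?_, ?_⟩
      · simp only [List.sum_cons]
        omega
      · intro y hy
        simp only [List.mem_cons] at hy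
        rcases hy with rfl | rfl | hy
        · omega
        · omega
        · exact h3 y hy⟩

/-- The alternating list `(1, m-1, 1, m-1, ...)` with `2i` entries. -/
def altL (m : ℕ) : ℕ → List ℕ
  | 0 => []
  | i + 1 => 1 :: (m - 1) :: altL m i

/-- The alternating list `(m-1, 1, m-1, 1, ...)` with `2i` entries. -/
def altL' (m : ℕ) : ℕ → List ℕ
  | 0 => []
  | i + 1 => (m - 1) :: 1 :: altL' m i

/-!
Write `T t = (1,m-1)^t (m-1,1)^(i-t)`. In the `j`-th summand of `c` every pair of adjacent
entries sums to `m`, except the two pairs containing `m-2`, which sum to `m-1`. So only those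
two merges survive in the differential, and they produce `T (j+1) - T j`; the sum over `j`
telescopes to `T i - T 0`.
-/

open Finsupp Finset

def IsOP (ℓ : ℤ) (m k : ℕ) (l : List ℕ) : Prop :=
  l.length = k ∧ (l.sum : ℤ) = ℓ ∧ ∀ x ∈ l, 1 ≤ x ∧ x < m

/-- The paper's `(j+1)`-st summand of `c`, with `m-2` in position `2j+2`. -/
def dipL (m i j : ℕ) : List ℕ :=
  altL m j ++ [1, m - 2] ++ altL m (i - j - 1) ++ [1]

theorem Finsupp.mapDomain_neg {α β M : Type*} [AddCommGroup M] {f : α → β} (v : α →₀ M) :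
    mapDomain f (-v) = -mapDomain f v :=
  map_neg (mapDomain.addMonoidHom f) v

theorem altL_append_one (m k : ℕ) : altL m k ++ [1] = 1 :: altL' m k := by
  induction k with
  | zero => rfl
  | succ k ih => simp only [altL, altL', List.cons_append, ih]

theorem altL_succ_append (m j : ℕ) (s : List ℕ) :
    altL m (j + 1) ++ s = altL m j ++ 1 :: (m - 1) :: s := by
  induction j with
  | zero => rfl
  | succ j ih => exact congrArg (fun t => 1 :: (m - 1) :: t) ih

theorem length_altL (m k : ℕ) : (altL m k).length = 2 * k := by
  induction k with
  | zero => rfl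
  | succ k ih => simp only [altL, List.length_cons, ih]; omega

theorem sum_altL {m : ℕ} (hm : 1 ≤ m) (k : ℕ) : (altL m k).sum = m * k := by
  induction k with
  | zero => rfl
  | succ k ih => rw [altL, List.sum_cons, List.sum_cons, ih, Nat.mul_succ]; omega

theorem mem_altL {m k x : ℕ} (hx : x ∈ altL m k) : x = 1 ∨ x = m - 1 := by
  induction k with
  | zero => simp [altL] at hx
  | succ k ih =>
    simp only [altL, List.mem_cons] at hx
    rcases hx with rfl | rfl | hx
    exacts [.inl rfl, .inr rfl, ih hx]

theorem isOP_altL {m : ℕ} (hm : 2 ≤ m) (k : ℕ) : IsOP (m * k) m (2 * k) (altL m k) :=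
  ⟨length_altL m k, by rw [sum_altL (by omega)]; push_cast; rfl,
    fun x hx => by rcases mem_altL hx with rfl | rfl <;> omega⟩

theorem isOP_altL' {m : ℕ} (hm : 2 ≤ m) (k : ℕ) : IsOP (m * k) m (2 * k) (altL' m k) := by
  obtain ⟨hlen, hsum, hmem⟩ := isOP_altL hm k
  have h := altL_append_one m k
  have hlen' := congrArg List.length h
  have hsum' := congrArg List.sum h
  simp only [List.length_append, List.length_cons, List.length_nil, List.sum_append, List.sum_cons,
    List.sum_nil] at hlen' hsum'
  refine ⟨by omega, by rwa [show (altL' m k).sum = (altL m k).sum by omega], fun x hx => ?_⟩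
  rcases List.mem_append.1 (h ▸ List.mem_cons_of_mem 1 hx) with hx | hx
  · exact hmem x hx
  · rw [List.mem_singleton.1 hx]; omega

theorem isOP_dipL {m i j : ℕ} (hm : 3 ≤ m) (hj : j < i) :
    IsOP (m * i) m (2 * i + 1) (dipL m i j) := by
  obtain ⟨a, rfl⟩ : ∃ a, i = j + 1 + a := ⟨i - j - 1, by omega⟩
  have ha : j + 1 + a - j - 1 = a := by omega
  refine ⟨?_, ?_, fun x hx => ?_⟩
  · simp only [dipL, ha, List.length_append, length_altL, List.length_cons, List.length_nil]
    omega
  · simp only [dipL, ha, List.sum_append, sum_altL (by omega : 1 ≤ m), List.sum_cons,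
      List.sum_nil]
    push_cast [Nat.cast_sub (by omega : 2 ≤ m)]
    ring
  · simp only [dipL, List.mem_append, List.mem_cons, List.not_mem_nil, or_false] at hx
    rcases hx with ((hx | rfl | rfl) | hx) | rfl
    all_goals first | omega | (rcases mem_altL hx with rfl | rfl <;> omega)

section Differential

variable {R : Type} [CommRing R] {m : ℕ}

theorem DL_single (l : List ℕ) : DL R m (single l 1) = dList R m l := by
  simp [DL]

theorem dList_cons_cons_cons {a b c : ℕ} (t : List ℕ) (hab : m ≤ a + b) (hbc : m ≤ b + c) :
    dList R m (a :: b :: c :: t) = mapDomain (fun l => a :: b :: l) (dList R m (c :: t)) := by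
  rw [dList, dList, if_neg (by omega), if_neg (by omega), zero_sub, zero_sub,
    mapDomain_neg, neg_neg, ← mapDomain_comp]
  rfl

theorem dList_altL_append (hm : 1 ≤ m) (j : ℕ) (s : List ℕ) :
    dList R m (altL m j ++ 1 :: s) = mapDomain (altL m j ++ ·) (dList R m (1 :: s)) := by
  induction j with
  | zero => exact mapDomain_id.symm
  | succ j ih =>
    obtain ⟨t, ht⟩ : ∃ t, altL m j ++ 1 :: s = 1 :: t := by cases j <;> exact ⟨_, rfl⟩
    change dList R m (1 :: (m - 1) :: (altL m j ++ 1 :: s)) = _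
    rw [ht, dList_cons_cons_cons _ (by omega) (by omega), ← ht, ih, ← mapDomain_comp]
    rfl

theorem dList_one_altL' (hm : 1 ≤ m) (k : ℕ) : dList R m (1 :: altL' m k) = 0 := by
  rw [← altL_append_one, dList_altL_append hm k []]
  simp [dList]

theorem dList_altL_dip_altL' (hm : 3 ≤ m) (j k : ℕ) :
    dList R m (altL m j ++ 1 :: (m - 2) :: 1 :: altL' m k) =
      single (altL m (j + 1) ++ altL' m k) 1 - single (altL m j ++ altL' m (k + 1)) 1 := by
  have hblock : dList R m (1 :: (m - 2) :: 1 :: altL' m k) =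
      single (1 :: (m - 1) :: altL' m k) 1 - single ((m - 1) :: 1 :: altL' m k) 1 := by
    rw [dList, dList, if_pos (by omega), if_pos (by omega), dList_one_altL' (by omega),
      show 1 + (m - 2) = m - 1 by omega, show m - 2 + 1 = m - 1 by omega, mapDomain_zero,
      sub_zero, mapDomain_neg, mapDomain_single]
    abel
  rw [dList_altL_append (by omega), hblock, mapDomain_sub, mapDomain_single, mapDomain_single,
    altL_succ_append]
  rfl

end Differential

section Complex

variable {R : Type} [CommRing R] {ℓ : ℤ} {m k : ℕ}

theorem eL_rL_of_mem_supported {x : List ℕ →₀ R}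
    (hx : x ∈ supported R R {l | IsOP ℓ m k l}) : eL R ℓ m k (rL R ℓ m k x) = x :=
  mapDomain_comapDomain _ Subtype.val_injective x (by rwa [Subtype.range_coe_subtype])

theorem rL_single {l : List ℕ} (h : IsOP ℓ m k l) (r : R) :
    rL R ℓ m k (single l r) = single (⟨l, h⟩ : OPb ℓ m k) r :=
  comapDomain_single Subtype.val (⟨l, h⟩ : OPb ℓ m k) r _

theorem DL_sum_dipL (hm : 3 ≤ m) (i : ℕ) :
    DL R m (∑ j ∈ range i, single (dipL m i j) 1) =
      single (altL m i) 1 - single (altL' m i) 1 := by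
  let T : ℕ → List ℕ →₀ R := fun t => single (altL m t ++ altL' m (i - t)) 1
  have hstep : ∀ j ∈ range i, DL R m (single (dipL m i j) 1) = T (j + 1) - T j := by
    intro j hj
    rw [mem_range] at hj
    have hdip : dipL m i j = altL m j ++ 1 :: (m - 2) :: 1 :: altL' m (i - j - 1) := by
      simp [dipL, altL_append_one]
    rw [DL_single, hdip, dList_altL_dip_altL' hm, show i - j - 1 + 1 = i - j by omega]
    simp only [T, show i - (j + 1) = i - j - 1 by omega]
  rw [map_sum, sum_congr rfl hstep, sum_range_sub]
  simp [T, altL, altL']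

end Complex

/-- in `OP_{2i}(mi, m)` (`m ≥ 3`), the cycles `(1,m-1,...,1,m-1)` and
`(m-1,1,...,m-1,1)` are homologous: their difference is the boundary of
`c = Σ_{j=1}^{i} (1,m-1,...,1,m-2,1,...,m-1,1)`, where in the `j`-th summand the entry
`m-2` appears in position `2j`. -/
theorem alt_cycles_homologous (R : Type) [CommRing R] (m i : ℕ) (hm : 3 ≤ m) :
    ∃ (c : OPMod R ((m : ℤ) * i) m (2 * i + 1))
      (b₁ b₂ : OPb ((m : ℤ) * i) m (2 * i)),
      b₁.1 = altL m i ∧ b₂.1 = altL' m i ∧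
      eL R ((m : ℤ) * i) m (2 * i + 1) c =
        ∑ j ∈ Finset.range i,
          Finsupp.single (altL m j ++ [1, m - 2] ++ altL m (i - j - 1) ++ [1]) (1 : R) ∧
      dOP R ((m : ℤ) * i) m (2 * i) c = Finsupp.single b₁ 1 - Finsupp.single b₂ 1 := by
  let x : List ℕ →₀ R := ∑ j ∈ range i, single (dipL m i j) 1
  have hx : x ∈ supported R R {l | IsOP (m * i) m (2 * i + 1) l} :=
    Submodule.sum_mem _ fun j hj => single_mem_supported R 1 (isOP_dipL hm (mem_range.1 hj))
  refine ⟨rL R _ m _ x, ⟨altL m i, isOP_altL (by omega) i⟩,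
    ⟨altL' m i, isOP_altL' (by omega) i⟩, rfl, rfl, eL_rL_of_mem_supported hx, ?_⟩
  rw [dOP, LinearMap.comp_apply, LinearMap.comp_apply, eL_rL_of_mem_supported hx, DL_sum_dipL hm,
    map_sub, rL_single (isOP_altL (by omega) i), rL_single (isOP_altL' (by omega) i)]
  rfl
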